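/- Let n ≥ 1 and let ω, θ ∈ Rₙⁿ be formal 1-forms with holomorphic (formal power series) coefficients. Assume θ is closed, i.e., ∂ᵢθⱼ = ∂ⱼθᵢ for all i, j, and that dω = θ ∧ ω, i.e., ∂ᵢωⱼ − ∂ⱼωᵢ = θᵢωⱼ − θⱼωᵢ for all i, j. Then there exist f ∈ Rₙ and a unit u ∈ Rₙ such that ωᵢ = u·∂ᵢf for all i; that is, ω is a unit multiple of an exact form df, so the foliation defined by ω admits the holomorphic first integral f. -/

import Mathlib

open MvPowerSeries

/-- Formal partial derivative `∂ᵢ` on multivariate formal power series. -/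
noncomputable def pd {n : ℕ} (i : Fin n) (f : MvPowerSeries (Fin n) ℂ) :
    MvPowerSeries (Fin n) ℂ :=
  fun m => ((m i : ℂ) + 1) * MvPowerSeries.coeff (m + Finsupp.single i 1) f

/-!
Let `E = ∑ xᵢ ∂ᵢ` be the Euler derivation, which multiplies the coefficient of `xᵐ` by `|m|`.
The operator `r ↦ r + E r - h r` is injective when `h` has no constant term, and
`∂ⱼ E = ∂ⱼ + E ∂ⱼ`. Hence a closed form `η` is exact with primitive `E⁻¹ (∑ xᵢ ηᵢ)`, and for
closed `θ` the unit `v` solving `E v = -(∑ xᵢ θᵢ) v` (by recursion on the degree) satisfies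
`∂ⱼ v = -θⱼ v`. Then `d(v ω) = v (dω - θ ∧ ω) = 0`, so `v ω = df` and `ω = v⁻¹ df`.
-/

namespace MvPowerSeries

open Finsupp

variable {σ R : Type*}

section Semiring

variable [Semiring R]

theorem coeff_mul_eq_coeff_mul_of_constantCoeff_eq_zero {h a b : MvPowerSeries σ R}
    (hh : constantCoeff h = 0) {m : σ →₀ ℕ}
    (hab : ∀ p : σ →₀ ℕ, p.degree < m.degree → coeff p a = coeff p b) :
    coeff m (h * a) = coeff m (h * b) := by
  classical
  rw [coeff_mul, coeff_mul]
  refine Finset.sum_congr rfl fun pq hpq => ?_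
  rw [Finset.HasAntidiagonal.mem_antidiagonal] at hpq
  by_cases h0 : pq.1 = 0
  · rw [h0, coeff_zero_eq_constantCoeff_apply, hh, zero_mul, zero_mul]
  · have hdeg : pq.1.degree + pq.2.degree = m.degree := by rw [← map_add, hpq]
    have hpos : pq.1.degree ≠ 0 := (degree_eq_zero_iff _).not.mpr h0
    rw [hab pq.2 (by omega)]

/-- The `k`-th iterate of `T` on `0` is correct in degrees `< k`; the fixed point takes its
coefficient of `xᵐ` from the iterate number `|m| + 1`. -/
theorem exists_isFixedPt_of_coeff_determined_by_lower_degrees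
    (T : MvPowerSeries σ R → MvPowerSeries σ R)
    (hT : ∀ a b m, (∀ p : σ →₀ ℕ, p.degree < m.degree → coeff p a = coeff p b) →
      coeff m (T a) = coeff m (T b)) :
    ∃ a, Function.IsFixedPt T a := by
  set iter : ℕ → MvPowerSeries σ R := fun k => T^[k] 0
  have iter_succ (k : ℕ) : iter (k + 1) = T (iter k) := Function.iterate_succ_apply' T k 0
  have agree (k : ℕ) :
      ∀ p : σ →₀ ℕ, p.degree < k → coeff p (iter k) = coeff p (iter (k + 1)) := by
    induction k with
    | zero => intro p hp; omega
    | succ k ih =>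
      intro p hp
      rw [iter_succ, iter_succ (k + 1)]
      exact hT _ _ _ fun q hq => ih q (by omega)
  have stable (p : σ →₀ ℕ) (k : ℕ) (hk : p.degree < k) :
      coeff p (iter k) = coeff p (iter (p.degree + 1)) := by
    induction k, hk using Nat.le_induction with
    | base => rfl
    | succ k hk ih => rw [← agree k p (by omega), ih]
  let lim : MvPowerSeries σ R := fun p => coeff p (iter (p.degree + 1))
  refine ⟨lim, ext fun m => ?_⟩
  calc coeff m (T lim) = coeff m (T (iter m.degree)) :=
        hT _ _ _ fun p hp => (stable p _ hp).symm
    _ = coeff m lim := by rw [← iter_succ]; rfl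

end Semiring

section CommSemiring

variable [CommSemiring R]

theorem coeff_X_mul_pderiv (i : σ) (f : MvPowerSeries σ R) (m : σ →₀ ℕ) :
    coeff m (X i * pderiv R i f) = m i * coeff m f := by
  classical
  rw [X, coeff_monomial_mul, one_mul]
  split_ifs with h
  · rw [coeff_pderiv, tsub_add_cancel_of_le h, mul_comm]
    have := Finsupp.single_le_iff.mp h
    simp only [Finsupp.tsub_apply, Finsupp.single_eq_same]
    norm_cast
    rw [Nat.sub_add_cancel this]
  · rw [Finsupp.single_le_iff, not_le, Nat.lt_one_iff] at h
    rw [h, Nat.cast_zero, zero_mul]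

def IsClosedForm (η : σ → MvPowerSeries σ R) : Prop :=
  ∀ i j, pderiv R i (η j) = pderiv R j (η i)

variable [Fintype σ]

noncomputable def euler : Derivation R (MvPowerSeries σ R) (MvPowerSeries σ R) :=
  ∑ i : σ, (X i : MvPowerSeries σ R) • pderiv R i

theorem euler_apply (f : MvPowerSeries σ R) : euler f = ∑ i, X i * pderiv R i f := by
  rw [euler, ← Derivation.coeFnAddMonoidHom_apply, map_sum, Finset.sum_apply]
  rfl

theorem coeff_euler (f : MvPowerSeries σ R) (m : σ →₀ ℕ) :
    coeff m (euler f) = m.degree * coeff m f := by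
  simp only [euler_apply, map_sum, coeff_X_mul_pderiv, ← Finset.sum_mul, degree_eq_sum,
    Nat.cast_sum]

theorem pderiv_euler (j : σ) (f : MvPowerSeries σ R) :
    pderiv R j (euler f) = pderiv R j f + euler (pderiv R j f) := by
  ext m
  rw [map_add, coeff_euler, coeff_pderiv, coeff_pderiv, coeff_euler, map_add, degree_single]
  push_cast
  ring

noncomputable def eulerContraction (η : σ → MvPowerSeries σ R) : MvPowerSeries σ R :=
  ∑ i, X i * η i

theorem constantCoeff_eulerContraction (η : σ → MvPowerSeries σ R) :
    constantCoeff (eulerContraction η) = 0 := by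
  simp [eulerContraction]

theorem pderiv_eulerContraction {η : σ → MvPowerSeries σ R} (hη : IsClosedForm η) (j : σ) :
    pderiv R j (eulerContraction η) = η j + euler (η j) := by
  classical
  simp only [eulerContraction, map_sum, Derivation.leibniz, smul_eq_mul, Finset.sum_add_distrib,
    pderiv_X, euler_apply, hη j]
  simp [Pi.single_apply, add_comm]

end CommSemiring

theorem isClosedForm_mul_of_pderiv_eq_neg_mul [CommRing R] {v : MvPowerSeries σ R}
    {θ ω : σ → MvPowerSeries σ R} (hv : ∀ j, pderiv R j v = -(θ j * v))
    (hω : ∀ i j, pderiv R i (ω j) - pderiv R j (ω i) = θ i * ω j - θ j * ω i) :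
    IsClosedForm fun j => v * ω j := by
  intro i j
  simp only [Derivation.leibniz, smul_eq_mul, hv]
  linear_combination v * hω i j

section Field

variable {K : Type*} [Field K]

/-- Since `0⁻¹ = 0` in `K`, this kills the constant term; it inverts `euler` on series
without constant term. -/
noncomputable def eulerInv (h : MvPowerSeries σ K) : MvPowerSeries σ K :=
  fun m => (m.degree : K)⁻¹ * coeff m h

theorem coeff_eulerInv (h : MvPowerSeries σ K) (m : σ →₀ ℕ) :
    coeff m (eulerInv h) = (m.degree : K)⁻¹ * coeff m h := rfl

theorem constantCoeff_eulerInv (h : MvPowerSeries σ K) : constantCoeff (eulerInv h) = 0 := by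
  rw [← coeff_zero_eq_constantCoeff_apply, coeff_eulerInv, map_zero, Nat.cast_zero, inv_zero,
    zero_mul]

variable [Fintype σ] [CharZero K]

theorem euler_eulerInv {h : MvPowerSeries σ K} (hh : constantCoeff h = 0) :
    euler (eulerInv h) = h := by
  ext m
  rw [coeff_euler, coeff_eulerInv]
  rcases eq_or_ne m 0 with rfl | hm
  · rw [coeff_zero_eq_constantCoeff_apply, hh, mul_zero, mul_zero]
  · have : (m.degree : K) ≠ 0 := Nat.cast_ne_zero.mpr ((degree_eq_zero_iff m).not.mpr hm)
    rw [mul_inv_cancel_left₀ this]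

theorem eq_zero_of_add_euler_eq_mul {h r : MvPowerSeries σ K} (hh : constantCoeff h = 0)
    (hr : r + euler r = h * r) : r = 0 := by
  ext m
  induction hd : m.degree using Nat.strong_induction_on generalizing m with
  | _ d ih =>
    have hm := congrArg (coeff m) hr
    rw [map_add, coeff_euler, coeff_mul_eq_coeff_mul_of_constantCoeff_eq_zero hh (b := 0)
      fun p hp => ih _ (hd ▸ hp) p rfl, mul_zero, map_zero, add_comm, ← add_one_mul] at hm
    exact (mul_eq_zero.mp hm).resolve_left (Nat.cast_add_one_ne_zero _)

theorem exists_pderiv_eq_of_isClosedForm {η : σ → MvPowerSeries σ K} (hη : IsClosedForm η) :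
    ∃ f, ∀ j, pderiv K j f = η j := by
  set f := eulerInv (eulerContraction η)
  refine ⟨f, fun j => sub_eq_zero.mp (eq_zero_of_add_euler_eq_mul (map_zero _) ?_)⟩
  have hf := pderiv_euler j f
  rw [euler_eulerInv (constantCoeff_eulerContraction η), pderiv_eulerContraction hη] at hf
  rw [map_sub, zero_mul]
  linear_combination -hf

theorem exists_isUnit_pderiv_eq_neg_mul {θ : σ → MvPowerSeries σ K} (hθ : IsClosedForm θ) :
    ∃ v, IsUnit v ∧ ∀ j, pderiv K j v = -(θ j * v) := by
  obtain ⟨v, hv⟩ := exists_isFixedPt_of_coeff_determined_by_lower_degrees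
    (fun v => 1 - eulerInv (eulerContraction θ * v)) fun a b m hab => by
      simp only [map_sub, coeff_eulerInv,
        coeff_mul_eq_coeff_mul_of_constantCoeff_eq_zero (constantCoeff_eulerContraction θ) hab]
  have hEv : euler v = -(eulerContraction θ * v) := by
    conv_lhs => rw [← hv]
    rw [map_sub, Derivation.map_one_eq_zero, euler_eulerInv (by
      rw [map_mul, constantCoeff_eulerContraction, zero_mul]), zero_sub]
  refine ⟨v, isUnit_iff_constantCoeff.mpr ?_, fun j => ?_⟩
  · rw [← hv, map_sub, constantCoeff_eulerInv, map_one, sub_zero]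
    exact isUnit_one
  -- The defect `r = ∂ⱼ v + θⱼ v` satisfies `r + E r = -(∑ xᵢ θᵢ) r`.
  refine eq_neg_of_add_eq_zero_left (eq_zero_of_add_euler_eq_mul (h := -eulerContraction θ)
    (by rw [map_neg, constantCoeff_eulerContraction, neg_zero]) ?_)
  have h1 := pderiv_euler j v
  rw [hEv, map_neg, Derivation.leibniz, pderiv_eulerContraction hθ] at h1
  rw [map_add, Derivation.leibniz, hEv]
  simp only [smul_eq_mul] at h1 ⊢
  linear_combination -h1

end Field

end MvPowerSeries

theorem pd_eq_pderiv {n : ℕ} (i : Fin n) (f : MvPowerSeries (Fin n) ℂ) :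
    pd i f = pderiv ℂ i f := by
  ext m
  rw [coeff_pderiv]
  exact mul_comm _ _

theorem holomorphic_first_integral_of_closed_theta_general (n : ℕ)
    (ω θ : Fin n → MvPowerSeries (Fin n) ℂ)
    (hclosed : ∀ i j : Fin n, pd i (θ j) = pd j (θ i))
    (hdω : ∀ i j : Fin n, pd i (ω j) - pd j (ω i) = θ i * ω j - θ j * ω i) :
    ∃ (f u : MvPowerSeries (Fin n) ℂ), IsUnit u ∧ ∀ i : Fin n, ω i = u * pd i f := by
  simp only [pd_eq_pderiv] at hclosed hdω ⊢
  obtain ⟨v, hv, hpv⟩ := exists_isUnit_pderiv_eq_neg_mul hclosed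
  obtain ⟨f, hf⟩ :=
    exists_pderiv_eq_of_isClosedForm (isClosedForm_mul_of_pderiv_eq_neg_mul hpv hdω)
  refine ⟨f, ↑hv.unit⁻¹, Units.isUnit _, fun i => ?_⟩
  rw [hf, ← mul_assoc, hv.val_inv_mul, one_mul]

/-- If `θ` is a closed holomorphic 1-form and `dω = θ ∧ ω`, then `ω` is a unit
multiple of an exact form `df`, so the foliation defined by `ω` admits a
holomorphic first integral. -/
theorem holomorphic_first_integral_of_closed_theta (n : ℕ) (hn : 1 ≤ n)
    (ω θ : Fin n → MvPowerSeries (Fin n) ℂ)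
    (hclosed : ∀ i j : Fin n, pd i (θ j) = pd j (θ i))
    (hdω : ∀ i j : Fin n, pd i (ω j) - pd j (ω i) = θ i * ω j - θ j * ω i) :
    ∃ (f u : MvPowerSeries (Fin n) ℂ), IsUnit u ∧ ∀ i : Fin n, ω i = u * pd i f :=
  holomorphic_first_integral_of_closed_theta_general n ω θ hclosed hdω
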